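/- Let d ∈ ℕ, c ≥ 0, m ∈ ℕ₀, and define ψ^l_{c,m}(x) := |x|^{-c/2-d/2} ∏_{j=1}^m (ln_j(|x|))^{-1/2} for |x| > e_m, and W_{c,m}(x) := (d(4-d)+c²+4c)/(4|x|²) + ((c+2)/(2|x|²)) Σ_{k=1}^m ∏_{j=1}^k (ln_j(|x|))^{-1} + (1/(4|x|²)) (Σ_{k=1}^m ∏_{j=1}^k (ln_j(|x|))^{-1})² + (1/(2|x|²)) Σ_{i=1}^m Σ_{j=1}^i ∏_{k=1}^i (ln_k(|x|))^{-1} ∏_{l=1}^j (ln_l(|x|))^{-1}. Then ψ^l_{c,m} is smooth on {x : |x| > e_m} and satisfies (-Δ + W_{c,m}) ψ^l_{c,m}(x) = 0 pointwise for all |x| > e_m. -/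

import Mathlib

open MeasureTheory Real Filter Finset
open scoped RealInnerProductSpace ENNReal Topology

/-- Iterated exponential: `iterExp 0 = 0`, `iterExp (n+1) = exp (iterExp n)`
(the `e_n` of the paper). -/
noncomputable def iterExp : ℕ → ℝ
  | 0 => 0
  | n + 1 => Real.exp (iterExp n)

/-- Iterated logarithm: `iterLog 1 r = log r`, `iterLog (n+1) r = log (iterLog n r)`
(the `ln_n` of the paper). -/
noncomputable def iterLog : ℕ → ℝ → ℝ
  | 0, r => r
  | n + 1, r => Real.log (iterLog n r)

/-- The Euclidean Laplacian `Δ f x = ∑ i, ∂²f/∂x_i² (x)`. -/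
noncomputable def lap {d : ℕ} (f : EuclideanSpace ℝ (Fin d) → ℝ)
    (x : EuclideanSpace ℝ (Fin d)) : ℝ :=
  ∑ i : Fin d, fderiv ℝ (fun y => fderiv ℝ f y (EuclideanSpace.single i 1)) x
    (EuclideanSpace.single i 1)

/-- `ψˡ_{c,m}(x) = |x|^{-c/2-d/2} ∏_{j=1}^m (ln_j |x|)^{-1/2}`. -/
noncomputable def psiL (d : ℕ) (c : ℝ) (m : ℕ) (x : EuclideanSpace ℝ (Fin d)) : ℝ :=
  ‖x‖ ^ (-(c / 2) - (d : ℝ) / 2) * ∏ j ∈ Finset.Icc 1 m, (iterLog j ‖x‖) ^ (-(1 : ℝ) / 2)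

/-- The potential `W_{c,m}` (as a function of `r = |x|`). -/
noncomputable def Wl (d : ℕ) (c : ℝ) (m : ℕ) (r : ℝ) : ℝ :=
  ((d : ℝ) * (4 - (d : ℝ)) + c ^ 2 + 4 * c) / (4 * r ^ 2)
    + ((c + 2) / (2 * r ^ 2)) * ∑ k ∈ Finset.Icc 1 m, ∏ j ∈ Finset.Icc 1 k, (iterLog j r)⁻¹
    + (1 / (4 * r ^ 2)) * (∑ k ∈ Finset.Icc 1 m, ∏ j ∈ Finset.Icc 1 k, (iterLog j r)⁻¹) ^ 2
    + (1 / (2 * r ^ 2)) * ∑ i ∈ Finset.Icc 1 m, ∑ j ∈ Finset.Icc 1 i,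
        (∏ k ∈ Finset.Icc 1 i, (iterLog k r)⁻¹) * ∏ l ∈ Finset.Icc 1 j, (iterLog l r)⁻¹


/-! Write `p = -(c + d)/2` and `P_k = ∏_{j ≤ k} (ln_j r)⁻¹`. Then `ψˡ_{c,m}(x) = φ(|x|)` for the
radial profile `φ(r) = r^p ∏_{j ≤ m} (ln_j r)^{-1/2} = exp H(r)`, so `Δψ = φ'' + (d - 1) φ' / r`.
Since `(ln_{k+1})' = P_k / r`, the logarithmic derivative is `A = H' = (p - S/2) / r` with
`S = ∑_{k ≤ m} P_k`, and `P_k' = -P_k S_k / r` gives `S' = -T / r` with `T = ∑_{k ≤ m} P_k S_k`, the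
double sum in `W_{c,m}`. As `φ'' = (A' + A²) φ`, the equation reduces to the algebraic identity
`A' + A² + (d - 1) A / r = W_{c,m}` in `r⁻¹`, `S` and `T`. -/

lemma iterExp_lt_succ (n : ℕ) : iterExp n < iterExp (n + 1) := by
  linarith [Real.add_one_le_exp (iterExp n), show iterExp (n + 1) = Real.exp (iterExp n) from rfl]

lemma iterExp_strictMono : StrictMono iterExp := strictMono_nat_of_lt_succ iterExp_lt_succ

lemma iterExp_nonneg (n : ℕ) : 0 ≤ iterExp n :=
  iterExp_strictMono.monotone (Nat.zero_le n)

lemma iterExp_lt_iterLog {n j : ℕ} {r : ℝ} (h : iterExp (n + j) < r) :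
    iterExp n < iterLog j r := by
  induction j generalizing n with
  | zero => exact h
  | succ j ih =>
    have h' : iterExp (n + 1) < iterLog j r := ih (by rwa [Nat.add_right_comm])
    exact (Real.lt_log_iff_exp_lt ((iterExp_nonneg _).trans_lt h')).2 h'

lemma iterLog_pos {k m : ℕ} {r : ℝ} (hk : k ≤ m) (hr : iterExp m < r) : 0 < iterLog k r :=
  iterExp_lt_iterLog (n := 0) (j := k) <| by
    rw [zero_add]; exact (iterExp_strictMono.monotone hk).trans_lt hr

lemma contDiffAt_iterLog {n : WithTop ℕ∞} {k m : ℕ} {r : ℝ} (hk : k ≤ m)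
    (hr : iterExp m < r) : ContDiffAt ℝ n (iterLog k) r := by
  induction k with
  | zero => exact contDiffAt_id
  | succ k ih => exact (ih (by omega)).log (iterLog_pos (by omega) hr).ne'

theorem hasFDerivAt_norm {F : Type*} [NormedAddCommGroup F] [InnerProductSpace ℝ F] {x : F}
    (hx : x ≠ 0) : HasFDerivAt (‖·‖) (‖x‖⁻¹ • innerSL ℝ x) x := by
  have hx2 : ‖x‖ ^ 2 ≠ 0 := by positivity
  convert (hasStrictFDerivAt_norm_sq x).hasFDerivAt.sqrt hx2 using 1
  · simp [Real.sqrt_sq (norm_nonneg _)]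
  · rw [Real.sqrt_sq (norm_nonneg _), two_smul, ← two_smul ℝ, smul_smul]
    field_simp

theorem HasDerivAt.hasFDerivAt_comp_norm {F : Type*} [NormedAddCommGroup F]
    [InnerProductSpace ℝ F] {f : ℝ → ℝ} {f' : ℝ} {x : F} (hx : x ≠ 0)
    (hf : HasDerivAt f f' ‖x‖) :
    HasFDerivAt (fun y => f ‖y‖) ((f' / ‖x‖) • innerSL ℝ x) x := by
  refine (hf.comp_hasFDerivAt x (hasFDerivAt_norm hx)).congr_fderiv ?_
  rw [smul_smul, div_eq_mul_inv]

theorem lap_comp_norm {d : ℕ} {f f' : ℝ → ℝ} {f'' : ℝ} {x : EuclideanSpace ℝ (Fin d)}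
    (hx : x ≠ 0) (hf : ∀ᶠ r in 𝓝 ‖x‖, HasDerivAt f (f' r) r) (hf' : HasDerivAt f' f'' ‖x‖) :
    lap (fun y => f ‖y‖) x = f'' + (d - 1) / ‖x‖ * f' ‖x‖ := by
  have hr : ‖x‖ ≠ 0 := norm_ne_zero_iff.2 hx
  set g : ℝ → ℝ := fun r => f' r / r
  have hg : HasDerivAt g ((f'' - g ‖x‖) / ‖x‖) ‖x‖ :=
    (hf'.div (hasDerivAt_id _) hr).congr_deriv (by simp only [g, id]; field_simp)
  have hpartial (i : Fin d) : (fun y => fderiv ℝ (fun y => f ‖y‖) y (EuclideanSpace.single i 1))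
      =ᶠ[𝓝 x] fun y => g ‖y‖ * y i := by
    filter_upwards [eventually_ne_nhds hx, continuous_norm.continuousAt.eventually hf]
      with y hy hfy
    simp [(hfy.hasFDerivAt_comp_norm hy).fderiv, g, EuclideanSpace.inner_single_right]
  have hsecond (i : Fin d) :
      fderiv ℝ (fun y => fderiv ℝ (fun y => f ‖y‖) y (EuclideanSpace.single i 1)) x
        (EuclideanSpace.single i 1) = (f'' - g ‖x‖) / ‖x‖ ^ 2 * x i ^ 2 + g ‖x‖ := by
    have hproj : HasFDerivAt (fun y : EuclideanSpace ℝ (Fin d) => y i)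
        (EuclideanSpace.proj i : EuclideanSpace ℝ (Fin d) →L[ℝ] ℝ) x :=
      (EuclideanSpace.proj i : EuclideanSpace ℝ (Fin d) →L[ℝ] ℝ).hasFDerivAt
    rw [(hpartial i).fderiv_eq, ((hg.hasFDerivAt_comp_norm hx).fun_mul hproj).fderiv]
    simp only [add_apply, smul_apply, PiLp.proj_apply, PiLp.single_eq_same, smul_eq_mul,
      mul_one, coe_innerSL_apply, EuclideanSpace.inner_single_right, ringHom_apply, one_mul]
    ring
  rw [lap, sum_congr rfl fun i _ => hsecond i, sum_add_distrib, ← mul_sum,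
    ← EuclideanSpace.real_norm_sq_eq, sum_const, card_univ, Fintype.card_fin, nsmul_eq_mul]
  simp only [g]
  field_simp
  ring

noncomputable def iterLogInvProd (k : ℕ) (r : ℝ) : ℝ := ∏ j ∈ Icc 1 k, (iterLog j r)⁻¹

noncomputable def iterLogInvProdSum (m : ℕ) (r : ℝ) : ℝ := ∑ k ∈ Icc 1 m, iterLogInvProd k r

noncomputable def iterLogInvProdPairSum (m : ℕ) (r : ℝ) : ℝ :=
  ∑ k ∈ Icc 1 m, iterLogInvProd k r * iterLogInvProdSum k r

lemma iterLogInvProd_succ (k : ℕ) (r : ℝ) :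
    iterLogInvProd (k + 1) r = iterLogInvProd k r * (iterLog (k + 1) r)⁻¹ :=
  prod_Icc_succ_top (by omega) _

lemma iterLogInvProdSum_succ (k : ℕ) (r : ℝ) :
    iterLogInvProdSum (k + 1) r = iterLogInvProdSum k r + iterLogInvProd (k + 1) r :=
  sum_Icc_succ_top (by omega) _

lemma hasDerivAt_iterLog_succ {k : ℕ} {r : ℝ} (hr : iterExp k < r) :
    HasDerivAt (iterLog (k + 1)) (iterLogInvProd k r / r) r := by
  induction k with
  | zero =>
    exact (Real.hasDerivAt_log ((iterExp_nonneg 0).trans_lt hr).ne').congr_deriv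
      (by simp [iterLogInvProd])
  | succ k ih =>
    have hL := (iterLog_pos le_rfl hr).ne'
    refine ((ih ((iterExp_lt_succ k).trans hr)).log hL).congr_deriv ?_
    rw [iterLogInvProd_succ]
    field_simp

lemma hasDerivAt_iterLogInvProd {k : ℕ} {r : ℝ} (hr : iterExp k < r) :
    HasDerivAt (iterLogInvProd k) (-(iterLogInvProd k r * iterLogInvProdSum k r) / r) r := by
  induction k with
  | zero =>
    have h1 : iterLogInvProd 0 = fun _ => 1 := funext fun r => by simp [iterLogInvProd]
    rw [h1]
    exact (hasDerivAt_const r (1 : ℝ)).congr_deriv (by simp [iterLogInvProdSum])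
  | succ k ih =>
    have hr' := (iterExp_lt_succ k).trans hr
    have hL := (iterLog_pos le_rfl hr).ne'
    rw [show iterLogInvProd (k + 1) = fun r => iterLogInvProd k r * (iterLog (k + 1) r)⁻¹ from
      funext fun r => iterLogInvProd_succ k r]
    refine ((ih hr').mul ((hasDerivAt_iterLog_succ hr').inv hL)).congr_deriv ?_
    rw [iterLogInvProdSum_succ, iterLogInvProd_succ, Pi.inv_apply]
    field_simp
    ring

lemma hasDerivAt_iterLogInvProdSum {m : ℕ} {r : ℝ} (hr : iterExp m < r) :
    HasDerivAt (iterLogInvProdSum m) (-iterLogInvProdPairSum m r / r) r := by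
  have hk : ∀ k ∈ Icc 1 m, iterExp k < r := fun k hk =>
    (iterExp_strictMono.monotone (mem_Icc.1 hk).2).trans_lt hr
  refine (HasDerivAt.fun_sum fun k hk' => hasDerivAt_iterLogInvProd (hk k hk')).congr_deriv ?_
  simp only [iterLogInvProdPairSum, neg_div, sum_div, sum_neg_distrib]

noncomputable def psiProfile (p : ℝ) (m : ℕ) (r : ℝ) : ℝ :=
  r ^ p * ∏ j ∈ Icc 1 m, iterLog j r ^ (-(1 : ℝ) / 2)

noncomputable def logPsiProfile (p : ℝ) (m : ℕ) (r : ℝ) : ℝ :=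
  p * Real.log r - 1 / 2 * ∑ j ∈ Icc 1 m, Real.log (iterLog j r)

noncomputable def psiProfileLogDeriv (p : ℝ) (m : ℕ) (r : ℝ) : ℝ :=
  (p - iterLogInvProdSum m r / 2) / r

section Profile

variable {p : ℝ} {m : ℕ} {r : ℝ}

lemma contDiffAt_psiProfile {n : WithTop ℕ∞} (hr : iterExp m < r) :
    ContDiffAt ℝ n (psiProfile p m) r :=
  (contDiffAt_id.rpow_const_of_ne ((iterExp_nonneg m).trans_lt hr).ne').mul <|
    contDiffAt_prod fun _ hj =>
      (contDiffAt_iterLog (mem_Icc.1 hj).2 hr).rpow_const_of_ne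
        (iterLog_pos (mem_Icc.1 hj).2 hr).ne'

lemma psiProfile_eq_exp (hr : iterExp m < r) :
    psiProfile p m r = Real.exp (logPsiProfile p m r) := by
  rw [psiProfile, logPsiProfile, sub_eq_add_neg, Real.exp_add,
    Real.rpow_def_of_pos ((iterExp_nonneg m).trans_lt hr), mul_comm (Real.log r),
    show -(1 / 2 * ∑ j ∈ Icc 1 m, Real.log (iterLog j r))
      = ∑ j ∈ Icc 1 m, Real.log (iterLog j r) * (-1 / 2) by rw [← sum_mul]; ring,
    Real.exp_sum]
  congr 1
  exact prod_congr rfl fun j hj => Real.rpow_def_of_pos (iterLog_pos (mem_Icc.1 hj).2 hr) _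

lemma hasDerivAt_logPsiProfile (hr : iterExp m < r) :
    HasDerivAt (logPsiProfile p m) (psiProfileLogDeriv p m r) r := by
  -- `fun r => log (iterLog j r)` is `iterLog (j + 1)` definitionally
  have hlog : ∀ j ∈ Icc 1 m,
      HasDerivAt (fun r => Real.log (iterLog j r)) (iterLogInvProd j r / r) r := fun j hj =>
    hasDerivAt_iterLog_succ ((iterExp_strictMono.monotone (mem_Icc.1 hj).2).trans_lt hr)
  refine (((Real.hasDerivAt_log ((iterExp_nonneg m).trans_lt hr).ne').const_mul p).sub
    ((HasDerivAt.fun_sum hlog).const_mul (1 / 2))).congr_deriv ?_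
  rw [psiProfileLogDeriv, iterLogInvProdSum, ← sum_div]
  ring

lemma hasDerivAt_psiProfile (hr : iterExp m < r) :
    HasDerivAt (psiProfile p m) (psiProfileLogDeriv p m r * psiProfile p m r) r := by
  have hexp : psiProfile p m =ᶠ[𝓝 r] fun r => Real.exp (logPsiProfile p m r) :=
    eventually_of_mem (Ioi_mem_nhds hr) fun r hr => psiProfile_eq_exp hr
  rw [hexp.eq_of_nhds, mul_comm]
  exact (hasDerivAt_logPsiProfile hr).exp.congr_of_eventuallyEq hexp

lemma hasDerivAt_psiProfileLogDeriv (hr : iterExp m < r) :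
    HasDerivAt (psiProfileLogDeriv p m)
      ((iterLogInvProdPairSum m r / 2 - (p - iterLogInvProdSum m r / 2)) / r ^ 2) r := by
  have hr0 := ((iterExp_nonneg m).trans_lt hr).ne'
  refine (((hasDerivAt_const r p).sub ((hasDerivAt_iterLogInvProdSum hr).div_const 2)).div
    (hasDerivAt_id r) hr0).congr_deriv ?_
  simp only [id, Pi.sub_apply]
  field_simp
  ring

lemma hasDerivAt_psiProfile_deriv (hr : iterExp m < r) :
    HasDerivAt (fun r => psiProfileLogDeriv p m r * psiProfile p m r)
      (((iterLogInvProdPairSum m r / 2 - (p - iterLogInvProdSum m r / 2)) / r ^ 2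
        + psiProfileLogDeriv p m r ^ 2) * psiProfile p m r) r :=
  ((hasDerivAt_psiProfileLogDeriv hr).mul (hasDerivAt_psiProfile hr)).congr_deriv (by ring)

end Profile

lemma Wl_eq (d : ℕ) (c : ℝ) (m : ℕ) (r : ℝ) : Wl d c m r =
    ((d : ℝ) * (4 - d) + c ^ 2 + 4 * c) / (4 * r ^ 2)
      + (c + 2) / (2 * r ^ 2) * iterLogInvProdSum m r
      + 1 / (4 * r ^ 2) * iterLogInvProdSum m r ^ 2
      + 1 / (2 * r ^ 2) * iterLogInvProdPairSum m r := by
  simp only [Wl, iterLogInvProdPairSum, iterLogInvProdSum, iterLogInvProd, mul_sum]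

lemma psiProfileLogDeriv_riccati (d : ℕ) (c : ℝ) (m : ℕ) {r : ℝ} (hr : r ≠ 0) :
    (iterLogInvProdPairSum m r / 2 - (-(c / 2) - d / 2 - iterLogInvProdSum m r / 2)) / r ^ 2
      + psiProfileLogDeriv (-(c / 2) - d / 2) m r ^ 2
      + (d - 1) / r * psiProfileLogDeriv (-(c / 2) - d / 2) m r = Wl d c m r := by
  rw [Wl_eq, psiProfileLogDeriv]
  field_simp
  ring

theorem psiL_zero_energy_general (d : ℕ) (c : ℝ) (m : ℕ) :
    ContDiffOn ℝ (⊤ : ℕ∞) (psiL d c m) {x : EuclideanSpace ℝ (Fin d) | iterExp m < ‖x‖} ∧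
    ∀ x : EuclideanSpace ℝ (Fin d), iterExp m < ‖x‖ →
      -lap (psiL d c m) x + Wl d c m ‖x‖ * psiL d c m x = 0 := by
  have hpsi : psiL d c m = fun x => psiProfile (-(c / 2) - d / 2) m ‖x‖ := rfl
  have hx0 {x : EuclideanSpace ℝ (Fin d)} (hx : iterExp m < ‖x‖) : x ≠ 0 :=
    norm_pos_iff.1 ((iterExp_nonneg m).trans_lt hx)
  refine ⟨fun x hx => ?_, fun x hx => ?_⟩
  · exact ((contDiffAt_psiProfile hx).comp x (contDiffAt_norm ℝ (hx0 hx))).contDiffWithinAt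
  · have hf : ∀ᶠ r in 𝓝 ‖x‖, HasDerivAt (psiProfile (-(c / 2) - d / 2) m)
        (psiProfileLogDeriv (-(c / 2) - d / 2) m r * psiProfile (-(c / 2) - d / 2) m r) r :=
      eventually_of_mem (Ioi_mem_nhds hx) fun r hr => hasDerivAt_psiProfile hr
    rw [hpsi, lap_comp_norm (hx0 hx) hf (hasDerivAt_psiProfile_deriv hx),
      ← psiProfileLogDeriv_riccati d c m ((iterExp_nonneg m).trans_lt hx).ne']
    ring

/-- `ψˡ_{c,m}` is smooth on `{|x| > e_m}` and satisfies
`(-Δ + W_{c,m}) ψˡ_{c,m} = 0` pointwise there. -/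
theorem psiL_zero_energy (d : ℕ) (hd : 0 < d) (c : ℝ) (hc : 0 ≤ c) (m : ℕ) :
    ContDiffOn ℝ (⊤ : ℕ∞) (psiL d c m) {x : EuclideanSpace ℝ (Fin d) | iterExp m < ‖x‖} ∧
    ∀ x : EuclideanSpace ℝ (Fin d), iterExp m < ‖x‖ →
      -lap (psiL d c m) x + Wl d c m ‖x‖ * psiL d c m x = 0 :=
  psiL_zero_energy_general d c m
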